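/- arXiv:math/0407261 — 4 statements merged into one kernel-verified Lean document; each statement's English description precedes it below -/
import Mathlib

section
/- For all ρ, r, α > 0 with ρ ≠ r, the integral ∫₀^∞ t^{-1} e^{-(ρ²+r²)/(2t)} I_α(ρr/t) dt equals α^{-1} γ^α [1 + (1-γ²)^{1/2}]^{-α}, where γ = 2ρr/(ρ²+r²). -/
/-!
Substituting `t = (ρ² + r²) / (2u)` turns the integral into
`∫₀^∞ u⁻¹ e^{-u} I_α(γu) du`. Expanding `I_α` and integrating termwise, each term is a Gamma
integral, and the integral becomes `(γ/2)^α T(γ²/4)` with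
`T(z) = ∑ Γ(α + 2k) / (k! Γ(α + k + 1)) z^k`. Up to the factor `α⁻¹`, `T` is the generating
function of the Raney numbers `α/(α + 2k) · binom(α + 2k, k)`, so `T(z) = α⁻¹ B(z)^α` with
`B(z) = 2 / (1 + √(1 - 4z))` the Catalan generating function. This identity is proved by an ODE
argument: both sides solve the same hypergeometric equation, are regular at `0` and agree there,
and on `(0, 1/4)` such solutions are proportional, because their Wronskian, multiplied by the
integrating factor `z^(α+1) √(1 - 4z)`, is constant and vanishes at `0`.
-/

open MeasureTheory Real Set Filter

noncomputable def besselI (ν z : ℝ) : ℝ :=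
  (z / 2) ^ ν * ∑' k : ℕ, (z / 2) ^ (2 * k) / (k.factorial * Real.Gamma (ν + k + 1))

open Topology

noncomputable def powerSum (a : ℕ → ℝ) (z : ℝ) : ℝ := ∑' k, a k * z ^ k

def derivCoeff (a : ℕ → ℝ) (k : ℕ) : ℝ := (k + 1) * a (k + 1)

def RadiusAtLeast (a : ℕ → ℝ) (R : ℝ) : Prop :=
  ∀ s, 0 ≤ s → s < R → Summable fun k => |a k| * s ^ k

section PowerSum

variable {a : ℕ → ℝ} {R z : ℝ}

lemma powerSum_zero (a : ℕ → ℝ) : powerSum a 0 = a 0 := by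
  rw [powerSum, tsum_eq_single 0 fun k hk => by simp [hk]]
  simp

lemma RadiusAtLeast.summable (h : RadiusAtLeast a R) (hz : |z| < R) :
    Summable fun k => a k * z ^ k :=
  .of_norm (by simpa [abs_mul, abs_pow] using h |z| (abs_nonneg z) hz)

lemma RadiusAtLeast.hasSum (h : RadiusAtLeast a R) (hz : |z| < R) :
    HasSum (fun k => a k * z ^ k) (powerSum a z) :=
  (h.summable hz).hasSum

lemma RadiusAtLeast.of_ratio_le {q : ℝ} (hq : 0 < q) (h : ∀ᶠ k in atTop, |a (k + 1)| ≤ q * |a k|) :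
    RadiusAtLeast a q⁻¹ := by
  intro s hs hsq
  have hqs : q * s < 1 := by rwa [← lt_inv_mul_iff₀ hq, mul_one]
  refine summable_of_ratio_norm_eventually_le hqs ?_
  filter_upwards [h] with k hk
  simp only [norm_mul, norm_abs_eq_norm, norm_pow, Real.norm_eq_abs, abs_of_nonneg hs, pow_succ]
  calc |a (k + 1)| * (s ^ k * s) ≤ q * |a k| * (s ^ k * s) := by gcongr
    _ = q * s * (|a k| * s ^ k) := by ring

lemma radiusAtLeast_derivCoeff (h : RadiusAtLeast a R) : RadiusAtLeast (derivCoeff a) R := by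
  intro s hs hsR
  obtain ⟨s', hss', hs'R⟩ := exists_between hsR
  have hs' : 0 < s' := hs.trans_lt hss'
  have hsmall : ∀ᶠ k : ℕ in atTop, ((k : ℝ) + 1) * (s / s') ^ k ≤ s' := by
    have ht₀ : 0 ≤ s / s' := div_nonneg hs hs'.le
    have ht₁ : s / s' < 1 := (div_lt_one hs').2 hss'
    have hlim := (tendsto_self_mul_const_pow_of_lt_one ht₀ ht₁).add
      (tendsto_pow_atTop_nhds_zero_of_lt_one ht₀ ht₁)
    filter_upwards [hlim.eventually (ge_mem_nhds (show (0 : ℝ) + 0 < s' by linarith))] with k hk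
    linarith
  refine .of_norm_bounded_eventually_nat ((summable_nat_add_iff 1).2 (h s' hs'.le hs'R)) ?_
  filter_upwards [hsmall] with k hk
  have hpow : ((k : ℝ) + 1) * s ^ k ≤ s' ^ (k + 1) := by
    rw [div_pow, mul_div_assoc', div_le_iff₀ (by positivity)] at hk
    linarith [pow_succ s' k]
  simp only [derivCoeff, norm_mul, norm_abs_eq_norm, norm_pow, Real.norm_eq_abs,
    abs_of_nonneg hs, abs_of_nonneg (show (0 : ℝ) ≤ k + 1 by positivity)]
  nlinarith [abs_nonneg (a (k + 1))]

lemma RadiusAtLeast.hasDerivAt (h : RadiusAtLeast a R) (hz : |z| < R) :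
    HasDerivAt (powerSum a) (powerSum (derivCoeff a) z) z := by
  obtain ⟨s, hzs, hsR⟩ := exists_between hz
  have hs : 0 ≤ s := (abs_nonneg z).trans hzs.le
  replace hzs : z ∈ Ioo (-s) s := abs_lt.1 hzs
  have hsplit : ∀ y ∈ Ioo (-s) s, powerSum a y = a 0 + ∑' k, a (k + 1) * y ^ (k + 1) := by
    intro y hy
    rw [powerSum, (h.summable ((abs_lt.2 hy).trans hsR)).tsum_eq_zero_add, pow_zero, mul_one]
  have hd := hasDerivAt_tsum_of_isPreconnected (g := fun k y => a (k + 1) * y ^ (k + 1))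
    (g' := fun k y => derivCoeff a k * y ^ k)
    (radiusAtLeast_derivCoeff h s hs hsR) isOpen_Ioo isPreconnected_Ioo
    (fun k y _ => ((hasDerivAt_pow (k + 1) y).const_mul (a (k + 1))).congr_deriv (by
      simp only [derivCoeff, add_tsub_cancel_right]; push_cast; ring))
    (fun k y hy => by
      rw [norm_mul, norm_pow, Real.norm_eq_abs]
      exact mul_le_mul_of_nonneg_left (pow_le_pow_left₀ (abs_nonneg y) (abs_lt.2 hy).le k)
        (abs_nonneg _))
    hzs ((summable_nat_add_iff 1).2 (h.summable ((abs_lt.2 hzs).trans hsR))) hzs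
  exact (hd.const_add (a 0)).congr_of_eventuallyEq
    (eventually_of_mem (isOpen_Ioo.mem_nhds hzs) hsplit)

lemma HasSum.natCast_mul_of_derivCoeff {s : ℝ}
    (h : HasSum (fun k => derivCoeff a k * z ^ k) s) :
    HasSum (fun k => k * a k * z ^ k) (z * s) := by
  refine (hasSum_nat_add_iff' 1).mp ?_
  rw [Finset.sum_range_one, Nat.cast_zero, zero_mul, zero_mul, sub_zero]
  refine (h.mul_left z).congr_fun fun k => ?_
  simp only [derivCoeff]
  push_cast
  ring

lemma RadiusAtLeast.hasSum_hypergeometric (h : RadiusAtLeast a R) (hz : |z| < R) (α : ℝ) :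
    HasSum (fun k : ℕ =>
        ((k + 1) * (k + α + 1) * a (k + 1) - (2 * k + α) * (2 * k + α + 1) * a k) * z ^ k)
      (z * (1 - 4 * z) * powerSum (derivCoeff (derivCoeff a)) z
        + (α + 1 - (4 * α + 6) * z) * powerSum (derivCoeff a) z - α * (α + 1) * powerSum a z) := by
  set y := powerSum a z
  set y' := powerSum (derivCoeff a) z
  set y'' := powerSum (derivCoeff (derivCoeff a)) z
  have h₀ : HasSum (fun k => a k * z ^ k) y := h.hasSum hz
  have h₁ : HasSum (fun k => derivCoeff a k * z ^ k) y' := (radiusAtLeast_derivCoeff h).hasSum hz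
  have h₂ : HasSum (fun k => derivCoeff (derivCoeff a) k * z ^ k) y'' :=
    (radiusAtLeast_derivCoeff (radiusAtLeast_derivCoeff h)).hasSum hz
  have hzy' := h₁.natCast_mul_of_derivCoeff
  have hzy'' := h₂.natCast_mul_of_derivCoeff
  have hzzy'' : HasSum (fun k : ℕ => k * ((k - 1) * a k) * z ^ k) (z * (z * y'')) := by
    refine HasSum.natCast_mul_of_derivCoeff (hzy''.congr_fun fun k => ?_)
    simp only [derivCoeff]
    push_cast
    ring
  rw [show z * (1 - 4 * z) * y'' + (α + 1 - (4 * α + 6) * z) * y' - α * (α + 1) * y =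
    z * y'' - 4 * (z * (z * y'')) + (α + 1) * y' - (4 * α + 6) * (z * y') - α * (α + 1) * y
    by ring]
  refine ((((hzy''.sub (hzzy''.mul_left 4)).add (h₁.mul_left (α + 1))).sub
    (hzy'.mul_left (4 * α + 6))).sub (h₀.mul_left (α * (α + 1)))).congr_fun fun k => ?_
  simp only [derivCoeff]
  ring

end PowerSum

lemma eq_of_hasDerivAt_zero_of_tendsto {f : ℝ → ℝ} {a b L : ℝ}
    (hf : ∀ x ∈ Ioo a b, HasDerivAt f 0 x) (hL : Tendsto f (𝓝[>] a) (𝓝 L)) :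
    ∀ x ∈ Ioo a b, f x = L := by
  intro x hx
  have hconst : ∀ y ∈ Ioo a b, f y = f x := fun y hy =>
    isOpen_Ioo.is_const_of_deriv_eq_zero isPreconnected_Ioo
      (fun t ht => (hf t ht).differentiableAt.differentiableWithinAt)
      (fun t ht => (hf t ht).deriv) hy hx
  refine tendsto_nhds_unique (tendsto_const_nhds.congr' ?_) hL
  filter_upwards [Ioo_mem_nhdsGT (hx.1.trans hx.2)] with y hy
  exact (hconst y hy).symm

/-- Solutions of the hypergeometric equation of `₂F₁(α/2, (α+1)/2; α+1; 4z)` on `[0, 1/4)` that are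
differentiable at `0`; the other solutions behave like `z^(-α)` there. -/
structure IsRegularSolution (α : ℝ) (y y' y'' : ℝ → ℝ) : Prop where
  hasDerivAt : ∀ z ∈ Ico (0 : ℝ) (1 / 4), HasDerivAt y (y' z) z
  hasDerivAt_deriv : ∀ z ∈ Ico (0 : ℝ) (1 / 4), HasDerivAt y' (y'' z) z
  ode : ∀ z ∈ Ioo (0 : ℝ) (1 / 4),
    z * (1 - 4 * z) * y'' z + (α + 1 - (4 * α + 6) * z) * y' z = α * (α + 1) * y z

lemma hasDerivAt_sqrt_one_sub_four_mul {z : ℝ} (hz : z < 1 / 4) :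
    HasDerivAt (fun x => √(1 - 4 * x)) (-2 / √(1 - 4 * z)) z := by
  have hs : 0 < 1 - 4 * z := by linarith
  refine ((((hasDerivAt_id z).const_mul 4).const_sub 1).sqrt hs.ne').congr_deriv ?_
  simp only [id, mul_one]
  ring

lemma hasDerivAt_rpow_mul_sqrt {α z : ℝ} (hz : z ∈ Ioo (0 : ℝ) (1 / 4)) :
    HasDerivAt (fun x => x ^ (α + 1) * √(1 - 4 * x))
      (z ^ α * (α + 1 - (4 * α + 6) * z) / √(1 - 4 * z)) z := by
  have hs : 0 < 1 - 4 * z := by linarith [hz.2]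
  refine ((Real.hasDerivAt_rpow_const (Or.inl hz.1.ne')).mul
    (hasDerivAt_sqrt_one_sub_four_mul hz.2)).congr_deriv ?_
  have hsq := Real.sq_sqrt hs.le
  have hpos := Real.sqrt_pos.2 hs
  calc _ = z ^ α / √(1 - 4 * z) * ((α + 1) * √(1 - 4 * z) ^ 2 - 2 * z) := by
        rw [add_sub_cancel_right, Real.rpow_add_one hz.1.ne']
        field_simp
        ring
    _ = _ := by rw [hsq]; ring

namespace IsRegularSolution

variable {α : ℝ} {y₁ y₁' y₁'' y₂ y₂' y₂'' : ℝ → ℝ}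

lemma wronskian_eq_zero (h₁ : IsRegularSolution α y₁ y₁' y₁'')
    (h₂ : IsRegularSolution α y₂ y₂' y₂'') (hα : -1 < α) {z : ℝ} (hz : z ∈ Ioo (0 : ℝ) (1 / 4)) :
    y₁ z * y₂' z - y₁' z * y₂ z = 0 := by
  set W := fun x => y₁ x * y₂' x - y₁' x * y₂ x
  have h0 : (0 : ℝ) ∈ Ico (0 : ℝ) (1 / 4) := left_mem_Ico.2 (by norm_num)
  -- `x ^ (α + 1) * √(1 - 4x)` is an integrating factor of the equation
  have hM : ∀ x ∈ Ioo (0 : ℝ) (1 / 4),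
      HasDerivAt (fun x => x ^ (α + 1) * √(1 - 4 * x) * W x) 0 x := by
    intro x hx
    have hx' := Ioo_subset_Ico_self hx
    have hW := ((h₁.hasDerivAt x hx').mul (h₂.hasDerivAt_deriv x hx')).sub
      ((h₁.hasDerivAt_deriv x hx').mul (h₂.hasDerivAt x hx'))
    refine ((hasDerivAt_rpow_mul_sqrt hx).mul hW).congr_deriv ?_
    have hs : 0 < 1 - 4 * x := by linarith [hx.2]
    have hsq := Real.sq_sqrt hs.le
    have hpos := Real.sqrt_pos.2 hs
    have hode : x * (1 - 4 * x) * (y₁ x * y₂'' x - y₁'' x * y₂ x)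
        + (α + 1 - (4 * α + 6) * x) * W x = 0 := by
      linear_combination y₁ x * h₂.ode x hx - y₂ x * h₁.ode x hx
    calc _ = x ^ α / √(1 - 4 * x) * (x * √(1 - 4 * x) ^ 2 * (y₁ x * y₂'' x - y₁'' x * y₂ x)
          + (α + 1 - (4 * α + 6) * x) * W x) := by
          simp only [W, Pi.mul_apply, Pi.sub_apply]
          rw [Real.rpow_add_one hx.1.ne']
          field_simp
          ring
      _ = 0 := by rw [hsq, hode, mul_zero]
  have hlim : Tendsto (fun x => x ^ (α + 1) * √(1 - 4 * x) * W x) (𝓝[>] 0) (𝓝 0) := by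
    have hc : ContinuousAt (fun x => x ^ (α + 1) * √(1 - 4 * x) * W x) 0 :=
      (((Real.continuousAt_rpow_const 0 (α + 1) (Or.inr (by linarith))).mul
        (by fun_prop)).mul
        (((h₁.hasDerivAt 0 h0).continuousAt.mul (h₂.hasDerivAt_deriv 0 h0).continuousAt).sub
          ((h₁.hasDerivAt_deriv 0 h0).continuousAt.mul (h₂.hasDerivAt 0 h0).continuousAt)))
    simpa [Real.zero_rpow (by linarith : α + 1 ≠ 0)] using hc.tendsto.mono_left nhdsWithin_le_nhds
  have hzero := eq_of_hasDerivAt_zero_of_tendsto hM hlim z hz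
  have hs : 0 < 1 - 4 * z := by linarith [hz.2]
  simpa [(Real.rpow_pos_of_pos hz.1 _).ne', (Real.sqrt_pos.2 hs).ne'] using hzero

lemma eq_div_mul (h₁ : IsRegularSolution α y₁ y₁' y₁'') (h₂ : IsRegularSolution α y₂ y₂' y₂'')
    (hα : -1 < α) (hy₂ : ∀ z ∈ Ico (0 : ℝ) (1 / 4), y₂ z ≠ 0) {z : ℝ}
    (hz : z ∈ Ioo (0 : ℝ) (1 / 4)) : y₁ z = y₁ 0 / y₂ 0 * y₂ z := by
  have h0 : (0 : ℝ) ∈ Ico (0 : ℝ) (1 / 4) := left_mem_Ico.2 (by norm_num)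
  have hderiv : ∀ x ∈ Ioo (0 : ℝ) (1 / 4), HasDerivAt (fun x => y₁ x / y₂ x) 0 x := by
    intro x hx
    have hx' := Ioo_subset_Ico_self hx
    refine ((h₁.hasDerivAt x hx').div (h₂.hasDerivAt x hx') (hy₂ x hx')).congr_deriv ?_
    rw [← neg_sub, wronskian_eq_zero h₁ h₂ hα hx, neg_zero, zero_div]
  have hlim : Tendsto (fun x => y₁ x / y₂ x) (𝓝[>] 0) (𝓝 (y₁ 0 / y₂ 0)) :=
    ((h₁.hasDerivAt 0 h0).continuousAt.div (h₂.hasDerivAt 0 h0).continuousAt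
      (hy₂ 0 h0)).tendsto.mono_left nhdsWithin_le_nhds
  rw [← eq_of_hasDerivAt_zero_of_tendsto hderiv hlim z hz,
    div_mul_cancel₀ _ (hy₂ z (Ioo_subset_Ico_self hz))]

end IsRegularSolution

noncomputable def catalanGF (z : ℝ) : ℝ := 2 / (1 + √(1 - 4 * z))

section CatalanGF

variable {z : ℝ}

lemma catalanGF_pos (z : ℝ) : 0 < catalanGF z := by
  unfold catalanGF; positivity

lemma catalanGF_zero : catalanGF 0 = 1 := by
  norm_num [catalanGF]

lemma hasDerivAt_catalanGF (hz : z < 1 / 4) :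
    HasDerivAt catalanGF (catalanGF z ^ 2 / √(1 - 4 * z)) z := by
  have hs := Real.sqrt_pos.2 (show 0 < 1 - 4 * z by linarith)
  refine ((((hasDerivAt_sqrt_one_sub_four_mul hz).const_add 1).inv (by positivity)).const_mul
    2).congr_deriv ?_
  simp only [catalanGF]
  field_simp

lemma isRegularSolution_catalanGF_rpow (α : ℝ) :
    IsRegularSolution α (fun z => catalanGF z ^ α)
      (fun z => α * catalanGF z ^ α * catalanGF z / √(1 - 4 * z))
      (fun z => α * catalanGF z ^ α *
        ((α + 1) * catalanGF z ^ 2 / √(1 - 4 * z) ^ 2 + 2 * catalanGF z / √(1 - 4 * z) ^ 3)) where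
  hasDerivAt z hz := by
    have hB := catalanGF_pos z
    have hs := Real.sqrt_pos.2 (show 0 < 1 - 4 * z by linarith [hz.2])
    refine ((hasDerivAt_catalanGF hz.2).rpow_const (p := α) (Or.inl hB.ne')).congr_deriv ?_
    rw [Real.rpow_sub_one hB.ne']
    field_simp
  hasDerivAt_deriv z hz := by
    have hB := catalanGF_pos z
    have hs := Real.sqrt_pos.2 (show 0 < 1 - 4 * z by linarith [hz.2])
    have hU := (hasDerivAt_catalanGF hz.2).rpow_const (p := α) (Or.inl hB.ne')
    refine (((hU.const_mul α).mul (hasDerivAt_catalanGF hz.2)).div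
      (hasDerivAt_sqrt_one_sub_four_mul hz.2) hs.ne').congr_deriv ?_
    simp only [Pi.mul_apply]
    rw [Real.rpow_sub_one hB.ne']
    field_simp
    ring
  ode z hz := by
    have hs : 0 < √(1 - 4 * z) := Real.sqrt_pos.2 (by linarith [hz.2])
    have hsq : √(1 - 4 * z) ^ 2 = 1 - 4 * z := Real.sq_sqrt (by linarith [hz.2])
    simp only [catalanGF]
    generalize (2 / (1 + √(1 - 4 * z))) ^ α = P
    generalize √(1 - 4 * z) = s at hs hsq
    obtain rfl : z = (1 - s ^ 2) / 4 := by linarith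
    field_simp
    ring

end CatalanGF

/-- `α * catalanCoeff α k = α / (α + 2k) * binom(α + 2k, k)` are the Raney numbers, whose
generating function is `catalanGF ^ α`. -/
noncomputable def catalanCoeff (α : ℝ) (k : ℕ) : ℝ :=
  Gamma (α + 2 * k) / (k.factorial * Gamma (α + k + 1))

section CatalanCoeff

variable {α : ℝ}

lemma catalanCoeff_zero (hα : 0 < α) : catalanCoeff α 0 = α⁻¹ := by
  have := (Gamma_pos_of_pos hα).ne'
  simp only [catalanCoeff, Nat.cast_zero, mul_zero, add_zero, Nat.factorial_zero, Nat.cast_one,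
    one_mul, Gamma_add_one hα.ne']
  field_simp

lemma catalanCoeff_succ (hα : 0 < α) (k : ℕ) :
    (k + 1) * (k + α + 1) * catalanCoeff α (k + 1) =
      (2 * k + α) * (2 * k + α + 1) * catalanCoeff α k := by
  have h₁ : α + 2 * k ≠ 0 := by positivity
  have h₂ : α + 2 * k + 1 ≠ 0 := by positivity
  have h₃ : α + k + 1 ≠ 0 := by positivity
  have hΓ := (Gamma_pos_of_pos (show 0 < α + k + 1 by positivity)).ne'
  simp only [catalanCoeff, Nat.factorial_succ]
  push_cast
  rw [show α + 2 * (k + 1) = α + 2 * k + 1 + 1 by ring, Gamma_add_one h₂, Gamma_add_one h₁,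
    show α + (k + 1) + 1 = α + k + 1 + 1 by ring, Gamma_add_one h₃]
  field_simp
  ring

lemma radiusAtLeast_catalanCoeff (hα : 0 < α) : RadiusAtLeast (catalanCoeff α) (1 / 4) := by
  have hpos k : 0 < catalanCoeff α k := by
    unfold catalanCoeff
    have := Gamma_pos_of_pos (show 0 < α + 2 * k by positivity)
    have := Gamma_pos_of_pos (show 0 < α + k + 1 by positivity)
    positivity
  rw [one_div]
  refine RadiusAtLeast.of_ratio_le four_pos ?_
  filter_upwards [eventually_ge_atTop ⌈α ^ 2⌉₊] with k hk
  have hk' : α ^ 2 ≤ k := (Nat.ceil_le).1 hk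
  rw [abs_of_pos (hpos _), abs_of_pos (hpos _)]
  refine le_of_mul_le_mul_left ?_ (show 0 < ((k : ℝ) + 1) * (k + α + 1) by positivity)
  rw [catalanCoeff_succ hα]
  nlinarith [hpos k]

lemma isRegularSolution_powerSum_catalanCoeff (hα : 0 < α) :
    IsRegularSolution α (powerSum (catalanCoeff α)) (powerSum (derivCoeff (catalanCoeff α)))
      (powerSum (derivCoeff (derivCoeff (catalanCoeff α)))) := by
  have hR := radiusAtLeast_catalanCoeff hα
  have habs : ∀ z ∈ Ico (0 : ℝ) (1 / 4), |z| < 1 / 4 := fun z hz => by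
    rw [abs_of_nonneg hz.1]; exact hz.2
  refine ⟨fun z hz => hR.hasDerivAt (habs z hz),
    fun z hz => (radiusAtLeast_derivCoeff hR).hasDerivAt (habs z hz), fun z hz => ?_⟩
  have h := hR.hasSum_hypergeometric (habs z ⟨hz.1.le, hz.2⟩) α
  simp only [catalanCoeff_succ hα, sub_self, zero_mul] at h
  linear_combination h.unique hasSum_zero

theorem powerSum_catalanCoeff (hα : 0 < α) {z : ℝ} (hz : z ∈ Ioo (0 : ℝ) (1 / 4)) :
    powerSum (catalanCoeff α) z = α⁻¹ * catalanGF z ^ α := by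
  rw [(isRegularSolution_powerSum_catalanCoeff hα).eq_div_mul (isRegularSolution_catalanGF_rpow α)
    (by linarith) (fun z _ => (rpow_pos_of_pos (catalanGF_pos z) α).ne') hz,
    powerSum_zero, catalanCoeff_zero hα, catalanGF_zero, one_rpow, div_one]

end CatalanCoeff

lemma integral_comp_div_Ioi {E : Type*} [NormedAddCommGroup E] [NormedSpace ℝ E] (g : ℝ → E)
    {c : ℝ} (hc : 0 < c) :
    ∫ t in Ioi (0 : ℝ), (c / t ^ 2) • g (c / t) = ∫ u in Ioi (0 : ℝ), g u := by
  have himage : (fun t => c / t) '' Ioi 0 = Ioi 0 := by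
    refine Subset.antisymm (image_subset_iff.2 fun t ht => div_pos hc ht) fun u hu => ?_
    exact ⟨c / u, div_pos hc hu, div_div_cancel₀ hc.ne'⟩
  have hinj : InjOn (fun t => c / t) (Ioi 0) := fun s _ t _ hst => by
    simpa [div_div_cancel₀ hc.ne'] using congrArg (c / ·) hst
  have hderiv : ∀ t ∈ Ioi (0 : ℝ), HasDerivWithinAt (fun t => c / t) (-c / t ^ 2) (Ioi 0) t :=
    fun t (ht : 0 < t) => (((hasDerivAt_const t c).div (hasDerivAt_id' t) ht.ne').congr_deriv
      (by ring)).hasDerivWithinAt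
  have hsubst := integral_image_eq_integral_abs_deriv_smul measurableSet_Ioi hderiv hinj g
  rw [himage] at hsubst
  rw [hsubst]
  refine setIntegral_congr_fun measurableSet_Ioi fun t _ => ?_
  rw [abs_div, abs_neg, abs_of_pos hc, abs_pow, sq_abs]

lemma integral_inv_mul_exp_neg_mul_besselI {α γ : ℝ} (hα : 0 < α) (hγ : 0 < γ) (hγ₁ : γ < 1) :
    ∫ u in Ioi (0 : ℝ), u⁻¹ * exp (-u) * besselI α (γ * u) =
      (γ / 2) ^ α * powerSum (catalanCoeff α) (γ ^ 2 / 4) := by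
  set d : ℕ → ℝ := fun k => (γ / 2) ^ α * (γ / 2) ^ (2 * k) / (k.factorial * Gamma (α + k + 1))
  set F : ℕ → ℝ → ℝ := fun k u => d k * (exp (-u) * u ^ (α + 2 * k - 1))
  have hpos : ∀ k : ℕ, 0 < α + 2 * k := fun k => by positivity
  have hd : ∀ k, 0 ≤ d k := fun k => by
    have := Gamma_pos_of_pos (show 0 < α + k + 1 by positivity)
    positivity
  have hF_int : ∀ k, IntegrableOn (F k) (Ioi 0) := fun k =>
    (GammaIntegral_convergent (hpos k)).const_mul _
  have hF_integral : ∀ k,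
      ∫ u in Ioi 0, F k u = (γ / 2) ^ α * (catalanCoeff α k * (γ ^ 2 / 4) ^ k) := by
    intro k
    simp only [F, d]
    rw [integral_const_mul, ← Gamma_eq_integral (hpos k), catalanCoeff, pow_mul]
    field_simp
    ring
  have hF_norm : ∀ k, ∫ u in Ioi 0, ‖F k u‖ = ∫ u in Ioi 0, F k u := fun k =>
    setIntegral_congr_fun measurableSet_Ioi fun u hu => Real.norm_of_nonneg
      (mul_nonneg (hd k) (mul_nonneg (exp_nonneg _) (rpow_nonneg (le_of_lt hu) _)))
  have hz : |γ ^ 2 / 4| < 1 / 4 := by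
    rw [abs_of_nonneg (by positivity)]; nlinarith
  have hseries := ((radiusAtLeast_catalanCoeff hα).hasSum hz).mul_left ((γ / 2) ^ α)
  have hsum := hasSum_integral_of_summable_integral_norm hF_int
    (by simpa only [hF_norm, hF_integral] using hseries.summable)
  simp only [hF_integral] at hsum
  rw [hseries.unique hsum]
  refine setIntegral_congr_fun measurableSet_Ioi fun u (hu : 0 < u) => ?_
  rw [besselI, show γ * u / 2 = γ / 2 * u by ring, mul_rpow (by positivity) hu.le,
    ← tsum_mul_left, ← tsum_mul_left]
  refine tsum_congr fun k => ?_
  simp only [F, d]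
  rw [show α + 2 * (k : ℝ) - 1 = α + ((2 * k : ℕ) : ℝ) - 1 by push_cast; ring,
    rpow_sub_one hu.ne', rpow_add hu, rpow_natCast, mul_pow]
  field_simp

theorem stmt1 (ρ r α : ℝ) (hρ : 0 < ρ) (hr : 0 < r) (hα : 0 < α) (hne : ρ ≠ r) :
    (∫ t in Ioi (0:ℝ), t⁻¹ * Real.exp (-(ρ ^ 2 + r ^ 2) / (2 * t)) * besselI α (ρ * r / t))
      = α⁻¹ * (2 * ρ * r / (ρ ^ 2 + r ^ 2)) ^ α *
        (1 + Real.sqrt (1 - (2 * ρ * r / (ρ ^ 2 + r ^ 2)) ^ 2)) ^ (-α) := by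
  set γ := 2 * ρ * r / (ρ ^ 2 + r ^ 2)
  set c := (ρ ^ 2 + r ^ 2) / 2
  have hc : 0 < c := by positivity
  have hγ : 0 < γ := by positivity
  have hγ₁ : γ < 1 := by
    rw [div_lt_one (by positivity)]
    nlinarith [sq_pos_of_ne_zero (sub_ne_zero.2 hne)]
  have hsubst : ∀ t ∈ Ioi (0 : ℝ),
      t⁻¹ * exp (-(ρ ^ 2 + r ^ 2) / (2 * t)) * besselI α (ρ * r / t) =
        (c / t ^ 2) • ((c / t)⁻¹ * exp (-(c / t)) * besselI α (γ * (c / t))) :=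
    fun t (ht : 0 < t) => by
      have hexp : -(ρ ^ 2 + r ^ 2) / (2 * t) = -(c / t) := by simp only [c]; field_simp
      have harg : γ * (c / t) = ρ * r / t := by simp only [γ, c]; field_simp
      rw [hexp, harg, smul_eq_mul]
      field_simp
  have hB : (γ / 2) ^ α * catalanGF (γ ^ 2 / 4) ^ α = γ ^ α * (1 + √(1 - γ ^ 2)) ^ (-α) := by
    rw [← mul_rpow (by positivity) (catalanGF_pos _).le, catalanGF,
      show γ / 2 * (2 / (1 + √(1 - 4 * (γ ^ 2 / 4)))) = γ * (1 + √(1 - γ ^ 2))⁻¹ by ring_nf,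
      mul_rpow hγ.le (by positivity), inv_rpow (by positivity), ← rpow_neg (by positivity)]
  rw [setIntegral_congr_fun measurableSet_Ioi hsubst,
    integral_comp_div_Ioi (fun u => u⁻¹ * exp (-u) * besselI α (γ * u)) hc,
    integral_inv_mul_exp_neg_mul_besselI hα hγ hγ₁,
    powerSum_catalanCoeff hα ⟨by positivity, by nlinarith⟩, mul_left_comm, hB, mul_assoc]
end

section
/- There exists a constant K > 0 such that for all ν > 0 and all z > 0, I_ν(z) ≤ K (z/2)^ν e^ν e^z / (ν + 1/2)^ν, where I_ν is the modified Bessel function of the first kind. -/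
open MeasureTheory Real Set Filter

/-!
Comparing the series termwise with that of `cosh`, via `(2k)! ≤ 4^k (k!)^2` and
`k! Γ(ν+1) ≤ Γ(ν+k+1)`, gives `I_ν(z) ≤ (z/2)^ν cosh z / Γ(ν+1)`. Restricting Euler's integral
for `Γ(ν+1)` to `[ν+1/2, ν+3/2]`, where the integrand is at least `(ν+1/2)^ν e^{-(ν+3/2)}`,
bounds `1/Γ(ν+1)`, and the theorem holds with `K = e^{3/2}`.
-/

open scoped Nat

lemma factorial_two_mul_le_four_pow_mul_sq (k : ℕ) : (2 * k)! ≤ 4 ^ k * k ! ^ 2 := by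
  have h := Nat.choose_mul_factorial_mul_factorial (show k ≤ 2 * k by omega)
  rw [show 2 * k - k = k by omega, ← Nat.centralBinom_eq_two_mul_choose] at h
  rw [← h, sq, ← mul_assoc]
  gcongr
  exact Nat.centralBinom_le_four_pow k

lemma factorial_mul_Gamma_add_one_le {ν : ℝ} (hν : 0 ≤ ν) (k : ℕ) :
    k ! * Gamma (ν + 1) ≤ Gamma (ν + k + 1) := by
  induction k with
  | zero => simp
  | succ k ih =>
    have hpos : 0 < ν + k + 1 := by positivity
    calc ((k + 1 : ℕ)! : ℝ) * Gamma (ν + 1) = (k + 1) * (k ! * Gamma (ν + 1)) := by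
          push_cast [Nat.factorial_succ]; ring
      _ ≤ (ν + k + 1) * Gamma (ν + k + 1) := by
          have := Gamma_pos_of_pos hpos
          exact mul_le_mul (by linarith) ih (by positivity) (by positivity)
      _ = Gamma (ν + (k + 1 : ℕ) + 1) := by
          rw [← Gamma_add_one hpos.ne']; push_cast; ring_nf

lemma besselI_term_le {ν : ℝ} (hν : 0 ≤ ν) (z : ℝ) (k : ℕ) :
    (z / 2) ^ (2 * k) / (k ! * Gamma (ν + k + 1)) ≤ z ^ (2 * k) / (2 * k)! / Gamma (ν + 1) := by
  have hΓ : 0 < Gamma (ν + 1) := Gamma_pos_of_pos (by positivity)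
  have hΓk : 0 < Gamma (ν + k + 1) := Gamma_pos_of_pos (by positivity)
  have hden : ((2 * k)! : ℝ) * Gamma (ν + 1) ≤ 4 ^ k * (k ! * Gamma (ν + k + 1)) :=
    calc ((2 * k)! : ℝ) * Gamma (ν + 1) ≤ 4 ^ k * k ! ^ 2 * Gamma (ν + 1) := by
          gcongr; exact_mod_cast factorial_two_mul_le_four_pow_mul_sq k
      _ = 4 ^ k * (k ! * (k ! * Gamma (ν + 1))) := by ring
      _ ≤ 4 ^ k * (k ! * Gamma (ν + k + 1)) := by
          gcongr; exact factorial_mul_Gamma_add_one_le hν k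
  rw [show (z / 2) ^ (2 * k) = z ^ (2 * k) / 4 ^ k by rw [div_pow, pow_mul (2 : ℝ)]; norm_num,
    div_div, div_div]
  exact div_le_div_of_nonneg_left ((even_two_mul k).pow_nonneg z) (by positivity) hden

lemma besselI_le_rpow_mul_cosh_div_Gamma {ν z : ℝ} (hν : 0 ≤ ν) (hz : 0 ≤ z) :
    besselI ν z ≤ (z / 2) ^ ν * cosh z / Gamma (ν + 1) := by
  have hterm_nonneg (k : ℕ) : 0 ≤ (z / 2) ^ (2 * k) / (k ! * Gamma (ν + k + 1)) := by
    have := Gamma_pos_of_pos (show 0 < ν + k + 1 by positivity)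
    positivity
  have hcosh := (hasSum_cosh z).div_const (Gamma (ν + 1))
  have hsum : ∑' k : ℕ, (z / 2) ^ (2 * k) / (k ! * Gamma (ν + k + 1))
      ≤ cosh z / Gamma (ν + 1) :=
    hasSum_le (besselI_term_le hν z)
      (Summable.of_nonneg_of_le hterm_nonneg (besselI_term_le hν z) hcosh.summable).hasSum hcosh
  rw [besselI, mul_div_assoc]
  exact mul_le_mul_of_nonneg_left hsum (by positivity)

lemma rpow_mul_exp_neg_le_Gamma_add_one {s a : ℝ} (hs : 0 ≤ s) (ha : 0 ≤ a) :
    a ^ s * exp (-(a + 1)) ≤ Gamma (s + 1) := by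
  have hint : IntegrableOn (fun x => exp (-x) * x ^ s) (Ioi 0) := by
    simpa using GammaIntegral_convergent (s := s + 1) (by positivity)
  have hsub : Ioc a (a + 1) ⊆ Ioi 0 := fun x hx => ha.trans_lt hx.1
  have hlow (x : ℝ) (hx : x ∈ Ioc a (a + 1)) : a ^ s * exp (-(a + 1)) ≤ exp (-x) * x ^ s := by
    rw [mul_comm]
    exact mul_le_mul (exp_le_exp.mpr (by linarith [hx.2])) (rpow_le_rpow ha hx.1.le hs)
      (by positivity) (exp_pos _).le
  calc a ^ s * exp (-(a + 1)) = volume.real (Ioc a (a + 1)) • (a ^ s * exp (-(a + 1))) := by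
        simp
    _ ≤ ∫ x in Ioc a (a + 1), exp (-x) * x ^ s :=
        setIntegral_ge_of_const_le measurableSet_Ioc (by simp) hlow (hint.mono_set hsub)
    _ ≤ ∫ x in Ioi 0, exp (-x) * x ^ s := by
        refine setIntegral_mono_set hint ?_ (Eventually.of_forall hsub)
        filter_upwards [ae_restrict_mem measurableSet_Ioi] with x (hx : 0 < x)
        positivity
    _ = Gamma (s + 1) := by
        rw [Gamma_eq_integral (by positivity)]
        simp

lemma cosh_le_exp {x : ℝ} (hx : 0 ≤ x) : cosh x ≤ exp x := by
  rw [cosh_eq]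
  linarith [exp_le_exp.mpr (show -x ≤ x by linarith)]

theorem stmt7 :
    ∃ K > (0:ℝ), ∀ ν z : ℝ, 0 < ν → 0 < z →
      besselI ν z ≤ K * (z / 2) ^ ν * Real.exp ν * Real.exp z / (ν + 1 / 2) ^ ν := by
  refine ⟨exp (3 / 2), exp_pos _, fun ν z hν hz => ?_⟩
  have hΓ := rpow_mul_exp_neg_le_Gamma_add_one hν.le (show 0 ≤ ν + 1 / 2 by positivity)
  calc besselI ν z ≤ (z / 2) ^ ν * cosh z / Gamma (ν + 1) :=
        besselI_le_rpow_mul_cosh_div_Gamma hν.le hz.le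
    _ ≤ (z / 2) ^ ν * exp z / ((ν + 1 / 2) ^ ν * exp (-(ν + 1 / 2 + 1))) := by
        gcongr
        exact cosh_le_exp hz.le
    _ = exp (3 / 2) * (z / 2) ^ ν * exp ν * exp z / (ν + 1 / 2) ^ ν := by
        rw [show ν + 1 / 2 + 1 = ν + 3 / 2 by ring, exp_neg, exp_add]
        field_simp
end

section
/- Suppose (α_j)_{j≥1} is a nondecreasing sequence of positive reals with α_j^{n-1} ≥ K₁ j for some K₁ > 0 and n ≥ 2, and α_j > α_1 for all j ≥ 2. Then for any ρ > 0 and b > 0, lim_{r→∞} ∑_{j=2}^∞ α_j^{b} (2ρ/r)^{α_j - α_1} = 0. -/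
/-!
Each term `α_j ^ b * x ^ (α_j - α_1)`, `x = 2ρ/r`, tends to `0` as `r → ∞` because its exponent
is positive, so it suffices to dominate the series uniformly for `|x| ≤ e⁻¹`. There each term is
at most `e^{α_1} α_j ^ b e^{-α_j}`, and the growth `K₁ j ≤ α_j ^ (n-1)` makes this summable:
`t ^ (b + 2(n-1)) e^{-t}` is bounded at infinity, so the terms are `O(1 / (K₁ j)²)`.
-/

open Real Filter Topology

theorem tendsto_atTop_of_tendsto_pow_atTop {ι : Type*} {l : Filter ι} {β : ι → ℝ} {m : ℕ}
    (hm : m ≠ 0) (hβ : ∀ i, 0 ≤ β i) (h : Tendsto (fun i => β i ^ m) l atTop) :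
    Tendsto β l atTop :=
  ((tendsto_rpow_atTop (by positivity : (0 : ℝ) < (m : ℝ)⁻¹)).comp h).congr fun i =>
    pow_rpow_inv_natCast (hβ i) hm

theorem summable_rpow_mul_exp_neg_of_mul_le_pow {β : ℕ → ℝ} {K : ℝ} {m : ℕ} (hK : 0 < K)
    (hm : m ≠ 0) (hβ : ∀ j, 0 < β j) (hgrowth : ∀ j : ℕ, K * j ≤ β j ^ m) (s : ℝ) :
    Summable fun j => β j ^ s * exp (-β j) := by
  have hβ_top : Tendsto β atTop atTop :=
    tendsto_atTop_of_tendsto_pow_atTop hm (fun j => (hβ j).le)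
      (tendsto_atTop_mono hgrowth (tendsto_natCast_atTop_atTop.const_mul_atTop hK))
  have hsmall : ∀ᶠ j in atTop, β j ^ (s + 2 * m) * exp (-β j) ≤ 1 := by
    have := (tendsto_rpow_mul_exp_neg_mul_atTop_nhds_zero (s + 2 * m) 1 one_pos).comp hβ_top
    simpa using this.eventually (eventually_le_nhds one_pos)
  refine ((summable_one_div_nat_pow.2 one_lt_two).mul_left (K⁻¹ ^ 2)).of_norm_bounded_eventually_nat
    ?_
  filter_upwards [hsmall, eventually_ge_atTop 1] with j hj hj1
  have hj0 : (0 : ℝ) < j := by exact_mod_cast hj1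
  rw [Real.norm_of_nonneg (mul_nonneg (rpow_nonneg (hβ j).le _) (exp_pos _).le)]
  calc β j ^ s * exp (-β j) = β j ^ (s + 2 * m) * exp (-β j) / (β j ^ m) ^ 2 := by
        rw [rpow_add (hβ j), show (2 * m : ℝ) = ((2 * m : ℕ) : ℝ) by push_cast; ring,
          rpow_natCast, pow_mul']
        field_simp [(pow_pos (hβ j) m).ne']
    _ ≤ 1 / (K * j) ^ 2 := by gcongr; exact hgrowth j
    _ = K⁻¹ ^ 2 * (1 / (j : ℝ) ^ 2) := by field_simp

theorem tendsto_tsum_rpow_mul_rpow_sub_nhds_zero {ι : Type*} {l : Filter ι} {x : ι → ℝ}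
    (hx : Tendsto x l (𝓝 0)) {β : ℕ → ℝ} {a s : ℝ} (hβ : ∀ j, 0 ≤ β j) (hgap : ∀ j, a < β j)
    (hsum : Summable fun j => β j ^ s * exp (-β j)) :
    Tendsto (fun i => ∑' j, β j ^ s * x i ^ (β j - a)) l (𝓝 0) := by
  have hterm : ∀ j, Tendsto (fun i => β j ^ s * x i ^ (β j - a)) l (𝓝 0) := by
    intro j
    have hγ : 0 < β j - a := sub_pos.2 (hgap j)
    simpa [zero_rpow hγ.ne'] using
      ((continuousAt_rpow_const 0 _ (Or.inr hγ.le)).tendsto.comp hx).const_mul (β j ^ s)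
  have hbound : ∀ᶠ i in l, ∀ j, ‖β j ^ s * x i ^ (β j - a)‖ ≤ exp a * (β j ^ s * exp (-β j)) := by
    filter_upwards [hx.eventually (Metric.closedBall_mem_nhds 0 (exp_pos (-1)))] with i hi j
    rw [Real.dist_eq, sub_zero] at hi
    have hγ : 0 ≤ β j - a := (sub_pos.2 (hgap j)).le
    have hβs : 0 ≤ β j ^ s := rpow_nonneg (hβ j) s
    calc ‖β j ^ s * x i ^ (β j - a)‖ = β j ^ s * |x i ^ (β j - a)| := by
          rw [norm_mul, Real.norm_of_nonneg hβs, Real.norm_eq_abs]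
      _ ≤ β j ^ s * |x i| ^ (β j - a) := by gcongr; exact abs_rpow_le_abs_rpow _ _
      _ ≤ β j ^ s * exp (-1) ^ (β j - a) := by gcongr
      _ = exp a * (β j ^ s * exp (-β j)) := by
          rw [← exp_mul, mul_left_comm, ← exp_add]
          ring_nf
  simpa using tendsto_tsum_of_dominated_convergence (hsum.mul_left (exp a)) hterm hbound

theorem stmt16_general (n : ℕ) (hn : 2 ≤ n) (α : ℕ → ℝ) (K₁ : ℝ) (hK₁ : 0 < K₁)
    (hpos : ∀ j, 1 ≤ j → 0 < α j)
    (hlow : ∀ j, 1 ≤ j → K₁ * j ≤ (α j) ^ (n - 1))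
    (hgap : ∀ j, 2 ≤ j → α 1 < α j)
    (ρ b : ℝ) :
    Filter.Tendsto
      (fun r : ℝ => ∑' j : ℕ, (α (j + 2)) ^ b * (2 * ρ / r) ^ (α (j + 2) - α 1))
      atTop (nhds 0) := by
  have hα_pos : ∀ j, 0 < α (j + 2) := fun j => hpos _ (by omega)
  have hgrowth : ∀ j : ℕ, K₁ * j ≤ α (j + 2) ^ (n - 1) := fun j =>
    le_trans (by gcongr; linarith) (hlow (j + 2) (by omega))
  exact tendsto_tsum_rpow_mul_rpow_sub_nhds_zero (tendsto_const_nhds.div_atTop tendsto_id)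
    (fun j => (hα_pos j).le) (fun j => hgap _ (by omega))
    (summable_rpow_mul_exp_neg_of_mul_le_pow hK₁ (by omega) hα_pos hgrowth b)

theorem stmt16 (n : ℕ) (hn : 2 ≤ n) (α : ℕ → ℝ) (K₁ : ℝ) (hK₁ : 0 < K₁)
    (hmono : Monotone α)
    (hpos : ∀ j, 1 ≤ j → 0 < α j)
    (hlow : ∀ j, 1 ≤ j → K₁ * j ≤ (α j) ^ (n - 1))
    (hgap : ∀ j, 2 ≤ j → α 1 < α j)
    (ρ b : ℝ) (hρ : 0 < ρ) (hb : 0 < b) :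
    Filter.Tendsto
      (fun r : ℝ => ∑' j : ℕ, (α (j + 2)) ^ b * (2 * ρ / r) ^ (α (j + 2) - α 1))
      atTop (nhds 0) :=
  stmt16_general n hn α K₁ hK₁ hpos hlow hgap ρ b
end

section
/- Let F: (0,∞) → ℝ be measurable and bounded by 1, with F(v) = v^{-q}(1+o(1)) as v → ∞ for some 0 < q < 1 (that is, for every ε > 0 there is M with (1-ε)v^{-q} ≤ F(v) ≤ (1+ε)v^{-q} for v ≥ M). Then for any a > 1-q, lim_{R→∞} R^{q-1} ∫₀^∞∫₀^∞ (1+sv/R)^{-2} F(v) e^{-s} s^{a-1} ds dv = Γ(a+q-1) ∫₀^∞ w^{-q}(1+w)^{-2} dw. -/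
open MeasureTheory Real Set Filter

lemma aux_int {q : ℝ} (hq0 : 0 < q) (hq1 : q < 1) :
    IntegrableOn (fun w : ℝ => w ^ (-q) * (1 + w) ^ (-(2:ℝ))) (Ioi 0) := by
  have h01 : IntegrableOn (fun w : ℝ => w ^ (-q) * (1 + w) ^ (-(2:ℝ))) (Ioc 0 1) := by
    have hi : IntegrableOn (fun w : ℝ => w ^ (-q)) (Ioc (0:ℝ) 1) := by
      have := intervalIntegral.intervalIntegrable_rpow' (a := (0:ℝ)) (b := 1) (r := -q)
        (by linarith)
      rwa [intervalIntegrable_iff_integrableOn_Ioc_of_le zero_le_one] at this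
    refine hi.mono' ?_ ?_
    · apply Measurable.aestronglyMeasurable
      fun_prop
    · filter_upwards [ae_restrict_mem measurableSet_Ioc] with w hw
      have hw0 : 0 < w := hw.1
      have h1 : (1 + w) ^ (-(2:ℝ)) ≤ 1 :=
        Real.rpow_le_one_of_one_le_of_nonpos (by linarith) (by norm_num)
      have h2 : (0:ℝ) ≤ (1 + w) ^ (-(2:ℝ)) := Real.rpow_nonneg (by linarith) _
      rw [Real.norm_eq_abs, abs_of_nonneg (by positivity)]
      nlinarith [Real.rpow_nonneg hw0.le (-q)]
  have h1i : IntegrableOn (fun w : ℝ => w ^ (-q) * (1 + w) ^ (-(2:ℝ))) (Ioi 1) := by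
    have hi : IntegrableOn (fun w : ℝ => w ^ (-q + -2)) (Ioi (1:ℝ)) :=
      integrableOn_Ioi_rpow_of_lt (by linarith) one_pos
    refine hi.mono' ?_ ?_
    · apply Measurable.aestronglyMeasurable
      fun_prop
    · filter_upwards [ae_restrict_mem measurableSet_Ioi] with w hw
      have hw0 : (0:ℝ) < w := lt_trans one_pos hw
      have h1 : (1 + w) ^ (-(2:ℝ)) ≤ w ^ (-(2:ℝ)) :=
        Real.rpow_le_rpow_of_nonpos hw0 (by linarith) (by norm_num)
      rw [Real.norm_eq_abs, abs_of_nonneg (by positivity), Real.rpow_add hw0]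
      have h2 : (0:ℝ) ≤ w ^ (-q) := Real.rpow_nonneg hw0.le _
      nlinarith
  have : Ioi (0:ℝ) = Ioc 0 1 ∪ Ioi 1 := (Ioc_union_Ioi_eq_Ioi zero_le_one).symm
  rw [this]
  exact h01.union h1i

lemma aux_scaled_eq {q c : ℝ} (hq0 : 0 < q) (hc : 0 < c) :
    ∫ v in Ioi (0:ℝ), v ^ (-q) * (1 + c*v) ^ (-(2:ℝ))
      = c ^ (q-1) * ∫ w in Ioi (0:ℝ), w ^ (-q) * (1 + w) ^ (-(2:ℝ)) := by
  have key : ∀ v ∈ Ioi (0:ℝ), v ^ (-q) * (1 + c*v) ^ (-(2:ℝ))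
      = c ^ q * ((c*v) ^ (-q) * (1 + c*v) ^ (-(2:ℝ))) := by
    intro v hv
    rw [Real.mul_rpow hc.le (le_of_lt hv), Real.rpow_neg hc.le]
    field_simp
  rw [setIntegral_congr_fun measurableSet_Ioi key]
  have := integral_comp_mul_left_Ioi (fun w : ℝ => w ^ (-q) * (1 + w) ^ (-(2:ℝ))) 0 hc
  simp only [mul_zero, smul_eq_mul] at this
  rw [MeasureTheory.integral_const_mul, this, ← mul_assoc]
  congr 1
  rw [Real.rpow_sub hc, Real.rpow_one]
  field_simp

lemma aux_scaled_int {q c : ℝ} (hq0 : 0 < q) (hq1 : q < 1) (hc : 0 < c) :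
    IntegrableOn (fun v : ℝ => v ^ (-q) * (1 + c*v) ^ (-(2:ℝ))) (Ioi 0) := by
  have h1 : IntegrableOn (fun v : ℝ => c ^ q * ((c*v) ^ (-q) * (1 + c*v) ^ (-(2:ℝ)))) (Ioi 0) := by
    have := (integrableOn_Ioi_comp_mul_left_iff
      (fun w : ℝ => w ^ (-q) * (1 + w) ^ (-(2:ℝ))) 0 hc).2 (by simpa using aux_int hq0 hq1)
    exact this.const_mul _
  refine h1.congr_fun ?_ measurableSet_Ioi
  intro v hv
  simp only
  rw [Real.mul_rpow hc.le (le_of_lt hv), Real.rpow_neg hc.le]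
  field_simp

lemma aux_key {q : ℝ} (F : ℝ → ℝ)
    (htail : ∀ ε > (0:ℝ), ∃ M > (0:ℝ), ∀ v ≥ M,
      (1 - ε) * v ^ (-q) ≤ F v ∧ F v ≤ (1 + ε) * v ^ (-q))
    {x : ℝ} (hx : 0 < x) :
    Tendsto (fun R : ℝ => R ^ q * F (R * x)) atTop (nhds (x ^ (-q))) := by
  rw [Metric.tendsto_atTop]
  intro ε hε
  set c := x ^ (-q) with hcdef
  have hc : 0 < c := Real.rpow_pos_of_pos hx _
  set e := ε / (2 * c) with hedef
  obtain ⟨M, hM, htl⟩ := htail e (by positivity)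
  refine ⟨max 1 (M / x), fun R hR => ?_⟩
  have hR1 : (1:ℝ) ≤ R := le_trans (le_max_left _ _) hR
  have hR0 : 0 < R := lt_of_lt_of_le one_pos hR1
  have hRx : M ≤ R * x := by
    have h' : M / x ≤ R := le_trans (le_max_right _ _) hR
    calc M = (M / x) * x := by field_simp
    _ ≤ R * x := by nlinarith
  obtain ⟨hlo, hhi⟩ := htl (R*x) hRx
  have hRq : 0 < R ^ q := Real.rpow_pos_of_pos hR0 _
  have hid : R ^ q * (R*x) ^ (-q) = c := by
    rw [hcdef, Real.mul_rpow hR0.le hx.le, Real.rpow_neg hR0.le]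
    have hne : R ^ q ≠ 0 := ne_of_gt hRq
    field_simp
  have h1 : R ^ q * ((1-e) * (R*x) ^ (-q)) ≤ R ^ q * F (R*x) :=
    mul_le_mul_of_nonneg_left hlo hRq.le
  have h2 : R ^ q * ((1-e) * (R*x) ^ (-q)) = (1-e) * c := by
    rw [show R ^ q * ((1-e) * (R*x) ^ (-q)) = (1-e) * (R ^ q * (R*x) ^ (-q)) from by ring, hid]
  have h3 : R ^ q * F (R*x) ≤ R ^ q * ((1+e) * (R*x) ^ (-q)) :=
    mul_le_mul_of_nonneg_left hhi hRq.le
  have h4 : R ^ q * ((1+e) * (R*x) ^ (-q)) = (1+e) * c := by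
    rw [show R ^ q * ((1+e) * (R*x) ^ (-q)) = (1+e) * (R ^ q * (R*x) ^ (-q)) from by ring, hid]
  have hec : e * c = ε / 2 := by
    rw [hedef]; field_simp
  rw [Real.dist_eq, abs_lt]
  constructor <;> nlinarith [h1, h2, h3, h4, hec, hε]

set_option maxHeartbeats 1000000 in
theorem stmt18 (q a : ℝ) (hq0 : 0 < q) (hq1 : q < 1) (ha : 1 - q < a)
    (F : ℝ → ℝ) (hF : Measurable F) (hFbdd : ∀ v : ℝ, 0 < v → |F v| ≤ 1)
    (htail : ∀ ε > (0:ℝ), ∃ M > (0:ℝ), ∀ v ≥ M,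
      (1 - ε) * v ^ (-q) ≤ F v ∧ F v ≤ (1 + ε) * v ^ (-q)) :
    Filter.Tendsto
      (fun R : ℝ => R ^ (q - 1) *
        ∫ v in Ioi (0:ℝ), ∫ s in Ioi (0:ℝ),
          (1 + s * v / R) ^ (-(2:ℝ)) * F v * Real.exp (-s) * s ^ (a - 1))
      atTop
      (nhds (Real.Gamma (a + q - 1) * ∫ w in Ioi (0:ℝ), w ^ (-q) * (1 + w) ^ (-(2:ℝ)))) := by
  have ha0 : 0 < a := by linarith
  have haq : 0 < a + q - 1 := by linarith
  -- global bound on F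
  obtain ⟨M, hM, hMtl⟩ := htail 1 one_pos
  set C : ℝ := 2 * max 1 (M ^ q) with hCdef
  have hC0 : 0 < C := by positivity
  have hC : ∀ v : ℝ, 0 < v → |F v| ≤ C * v ^ (-q) := by
    intro v hv
    rcases le_or_gt M v with h | h
    · obtain ⟨h1, h2⟩ := hMtl v h
      have hvq : 0 < v ^ (-q) := Real.rpow_pos_of_pos hv _
      have hab : |F v| ≤ 2 * v ^ (-q) := by
        rw [abs_le]; constructor <;> nlinarith
      calc |F v| ≤ 2 * v ^ (-q) := hab
      _ ≤ C * v ^ (-q) := by rw [hCdef]; nlinarith [le_max_left 1 (M ^ q)]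
    · have h1 : |F v| ≤ 1 := hFbdd v hv
      have h2 : M ^ (-q) ≤ v ^ (-q) := Real.rpow_le_rpow_of_nonpos hv h.le (by linarith)
      have h3 : M ^ q * M ^ (-q) = 1 := by
        rw [← Real.rpow_add hM]; simp
      have h4 : (0:ℝ) < M ^ q := Real.rpow_pos_of_pos hM _
      have h5 : M ^ q ≤ max 1 (M ^ q) := le_max_right _ _
      calc |F v| ≤ 1 := h1
      _ ≤ C * v ^ (-q) := by rw [hCdef]; nlinarith [Real.rpow_pos_of_pos hv (-q)]
  -- measures
  set μ0 : Measure ℝ := volume.restrict (Ioi 0) with hμ0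
  set P : Measure (ℝ × ℝ) := μ0.prod μ0 with hPdef
  have haeP : ∀ᵐ p ∂P, p ∈ (Ioi (0:ℝ)) ×ˢ (Ioi (0:ℝ)) := by
    rw [hPdef, hμ0, Measure.prod_restrict]
    exact ae_restrict_mem (measurableSet_Ioi.prod measurableSet_Ioi)
  -- the transformed integrand and limit
  set Φ : ℝ → ℝ × ℝ → ℝ := fun R p =>
    ((1 + p.2) ^ (-(2:ℝ)) * F (R * p.2 / p.1) * Real.exp (-p.1) * p.1 ^ (a-1)) *
      ((p.1/R)⁻¹ * R ^ (q-1)) with hΦdef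
  set L : ℝ × ℝ → ℝ := fun p =>
    (Real.exp (-p.1) * p.1 ^ (a+q-1-1)) * (p.2 ^ (-q) * (1 + p.2) ^ (-(2:ℝ))) with hLdef
  set bound : ℝ × ℝ → ℝ := fun p =>
    (C * (Real.exp (-p.1) * p.1 ^ (a+q-1-1))) * (p.2 ^ (-q) * (1 + p.2) ^ (-(2:ℝ)))
    with hbddef
  -- measurability of Φ R
  have hmeasΦ : ∀ R : ℝ, AEStronglyMeasurable (Φ R) P := by
    intro R
    apply Measurable.aestronglyMeasurable
    have hmF : Measurable fun p : ℝ × ℝ => F (R * p.2 / p.1) := by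
      apply hF.comp; fun_prop
    fun_prop
  -- uniform bound
  have h_bound : ∀ R : ℝ, 1 ≤ R → ∀ᵐ p ∂P, ‖Φ R p‖ ≤ bound p := by
    intro R hR1
    have hR0 : (0:ℝ) < R := lt_of_lt_of_le one_pos hR1
    filter_upwards [haeP] with p hp
    obtain ⟨hs, hw⟩ := hp
    rw [mem_Ioi] at hs hw
    have hx : 0 < R * p.2 / p.1 := by positivity
    have hFb := hC _ hx
    have hX : (0:ℝ) ≤ (1 + p.2) ^ (-(2:ℝ)) := Real.rpow_nonneg (by linarith) _
    have hE : (0:ℝ) ≤ Real.exp (-p.1) := (Real.exp_pos _).le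
    have hS : (0:ℝ) ≤ p.1 ^ (a-1) := Real.rpow_nonneg hs.le _
    have hT : (0:ℝ) ≤ (p.1/R)⁻¹ * R ^ (q-1) := by positivity
    have e1 : (R * p.2 / p.1) ^ (-q) * ((p.1/R)⁻¹ * R ^ (q-1)) = p.2 ^ (-q) * p.1 ^ (q-1) := by
      rw [Real.rpow_neg (by positivity), Real.div_rpow (by positivity) hs.le,
        Real.mul_rpow hR0.le hw.le, Real.rpow_neg hw.le, Real.rpow_sub hs, Real.rpow_sub hR0,
        Real.rpow_one, Real.rpow_one]
      have h1 : R ^ q ≠ 0 := ne_of_gt (Real.rpow_pos_of_pos hR0 _)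
      have h2 : p.1 ^ q ≠ 0 := ne_of_gt (Real.rpow_pos_of_pos hs _)
      have h3 : p.2 ^ q ≠ 0 := ne_of_gt (Real.rpow_pos_of_pos hw _)
      field_simp
    have e2 : p.1 ^ (a-1) * p.1 ^ (q-1) = p.1 ^ (a+q-1-1) := by
      rw [← Real.rpow_add hs]; ring_nf
    calc ‖Φ R p‖
        = ((1 + p.2) ^ (-(2:ℝ)) * |F (R * p.2 / p.1)| * Real.exp (-p.1) * p.1 ^ (a-1)) *
            ((p.1/R)⁻¹ * R ^ (q-1)) := by
          rw [hΦdef]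
          simp only [Real.norm_eq_abs]
          rw [abs_mul, abs_mul, abs_mul, abs_mul, abs_of_nonneg hX, abs_of_nonneg hE,
            abs_of_nonneg hS, abs_of_nonneg hT]
      _ ≤ ((1 + p.2) ^ (-(2:ℝ)) * (C * (R * p.2 / p.1) ^ (-q)) * Real.exp (-p.1) *
            p.1 ^ (a-1)) * ((p.1/R)⁻¹ * R ^ (q-1)) := by gcongr
      _ = bound p := by
          rw [hbddef]
          simp only
          linear_combination (C * ((1 + p.2) ^ (-(2:ℝ))) * Real.exp (-p.1) * p.1 ^ (a-1)) * e1
            + (C * ((1 + p.2) ^ (-(2:ℝ))) * Real.exp (-p.1) * p.2 ^ (-q)) * e2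
  -- integrability of bound
  have bound_int : Integrable bound P :=
    ((Real.GammaIntegral_convergent haq).const_mul C).mul_prod (aux_int hq0 hq1)
  -- integrability of Φ R
  have hΦint : ∀ R : ℝ, 1 ≤ R → Integrable (Φ R) P := fun R hR1 =>
    bound_int.mono' (hmeasΦ R) (h_bound R hR1)
  -- pointwise limit
  have h_lim : ∀ᵐ p ∂P, Tendsto (fun R => Φ R p) atTop (nhds (L p)) := by
    filter_upwards [haeP] with p hp
    obtain ⟨hs, hw⟩ := hp
    rw [mem_Ioi] at hs hw
    have hx : 0 < p.2 / p.1 := by positivity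
    have hkey := (aux_key F htail hx).const_mul
      ((1 + p.2) ^ (-(2:ℝ)) * Real.exp (-p.1) * p.1 ^ (a-1) / p.1)
    have hval : ((1 + p.2) ^ (-(2:ℝ)) * Real.exp (-p.1) * p.1 ^ (a-1) / p.1) *
        ((p.2 / p.1) ^ (-q)) = L p := by
      have e5 : (p.2 / p.1) ^ (-q) = p.2 ^ (-q) * p.1 ^ q := by
        rw [Real.rpow_neg (by positivity), Real.div_rpow hw.le hs.le, Real.rpow_neg hw.le]
        have h2 : p.1 ^ q ≠ 0 := ne_of_gt (Real.rpow_pos_of_pos hs _)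
        have h3 : p.2 ^ q ≠ 0 := ne_of_gt (Real.rpow_pos_of_pos hw _)
        field_simp
      have e6 : p.1 ^ (a-1) * p.1 ^ q = p.1 ^ (a+q-1-1) * p.1 := by
        rw [← Real.rpow_add hs, ← Real.rpow_add_one (ne_of_gt hs)]
        congr 1
        ring
      rw [hLdef, e5]
      simp only
      have hsne : p.1 ≠ 0 := ne_of_gt hs
      field_simp
      linear_combination e6
    rw [hval] at hkey
    refine hkey.congr' ?_
    filter_upwards [eventually_gt_atTop (0:ℝ)] with R hR0
    have e3 : (p.1/R)⁻¹ * R ^ (q-1) = R ^ q / p.1 := by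
      rw [Real.rpow_sub hR0, Real.rpow_one]
      field_simp
    rw [hΦdef]
    simp only
    rw [e3, show R * (p.2 / p.1) = R * p.2 / p.1 from by ring]
    ring
  -- DCT
  have hDCT := tendsto_integral_filter_of_dominated_convergence (μ := P) bound
    (Eventually.of_forall hmeasΦ) ((eventually_ge_atTop 1).mono h_bound) bound_int h_lim
  -- value of limit integral
  have hLval : ∫ p, L p ∂P
      = Real.Gamma (a+q-1) * ∫ w in Ioi (0:ℝ), w ^ (-q) * (1 + w) ^ (-(2:ℝ)) := by
    rw [hLdef, hPdef]
    rw [MeasureTheory.integral_prod_mul (μ := μ0) (ν := μ0)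
      (f := fun s => Real.exp (-s) * s ^ (a+q-1-1))
      (g := fun w => w ^ (-q) * (1 + w) ^ (-(2:ℝ)))]
    rw [hμ0, ← Real.Gamma_eq_integral haq]
  rw [hLval] at hDCT
  -- main identity for R ≥ 1
  refine Tendsto.congr' ?_ hDCT
  filter_upwards [eventually_ge_atTop (1:ℝ)] with R hR1
  have hR0 : (0:ℝ) < R := lt_of_lt_of_le one_pos hR1
  -- integrability of the original integrand on the product
  set G : ℝ × ℝ → ℝ := fun p =>
    (C * (Real.exp (-p.2) * p.2 ^ (a-1))) * (p.1 ^ (-q) * (1 + (p.2/R) * p.1) ^ (-(2:ℝ)))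
    with hGdef
  have hGmeas : AEStronglyMeasurable G P := by
    apply Measurable.aestronglyMeasurable
    fun_prop
  have hGint : Integrable G P := by
    rw [hPdef]
    rw [MeasureTheory.integrable_prod_iff' hGmeas]
    constructor
    · rw [hμ0]
      filter_upwards [ae_restrict_mem measurableSet_Ioi] with s hs
      rw [mem_Ioi] at hs
      simp only [hGdef]
      exact (aux_scaled_int hq0 hq1 (show (0:ℝ) < s/R by positivity)).const_mul _
    · have hi : Integrable (fun s : ℝ =>
          (C * (∫ w in Ioi (0:ℝ), w ^ (-q) * (1 + w) ^ (-(2:ℝ))) * R ^ (1-q)) *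
          (Real.exp (-s) * s ^ (a+q-1-1))) μ0 :=
        (Real.GammaIntegral_convergent haq).const_mul _
      refine hi.congr ?_
      rw [hμ0]
      filter_upwards [ae_restrict_mem measurableSet_Ioi] with s hs
      rw [mem_Ioi] at hs
      have hsR : (0:ℝ) < s / R := by positivity
      have hnorm : ∀ v ∈ Ioi (0:ℝ), ‖G (v, s)‖
          = (C * (Real.exp (-s) * s ^ (a-1))) * (v ^ (-q) * (1 + (s/R) * v) ^ (-(2:ℝ))) := by
        intro v hv
        rw [mem_Ioi] at hv
        rw [hGdef]
        simp only [Real.norm_eq_abs]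
        rw [abs_of_nonneg (by positivity)]
      rw [show (∫ v, ‖G (v, s)‖ ∂(volume.restrict (Ioi 0)))
          = ∫ v in Ioi (0:ℝ), (C * (Real.exp (-s) * s ^ (a-1))) *
            (v ^ (-q) * (1 + (s/R) * v) ^ (-(2:ℝ))) from
        setIntegral_congr_fun measurableSet_Ioi hnorm]
      rw [MeasureTheory.integral_const_mul, aux_scaled_eq hq0 hsR]
      have e7 : (s/R) ^ (q-1) = s ^ (q-1) * R ^ (1-q) := by
        rw [Real.div_rpow hs.le hR0.le, show (1-q : ℝ) = -(q-1) from by ring,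
          Real.rpow_neg hR0.le, div_eq_mul_inv]
      have e8 : s ^ (a-1) * s ^ (q-1) = s ^ (a+q-1-1) := by
        rw [← Real.rpow_add hs]; ring_nf
      rw [e7, ← e8]
      ring
  have hfmeas : AEStronglyMeasurable
      (fun p : ℝ × ℝ => (1 + p.2 * p.1 / R) ^ (-(2:ℝ)) * F p.1 * Real.exp (-p.2) *
        p.2 ^ (a-1)) P := by
    apply Measurable.aestronglyMeasurable
    have hmF : Measurable fun p : ℝ × ℝ => F p.1 := hF.comp measurable_fst
    fun_prop
  have hfInt : Integrable
      (fun p : ℝ × ℝ => (1 + p.2 * p.1 / R) ^ (-(2:ℝ)) * F p.1 * Real.exp (-p.2) *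
        p.2 ^ (a-1)) P := by
    refine hGint.mono' hfmeas ?_
    filter_upwards [haeP] with p hp
    obtain ⟨hv, hs⟩ := hp
    rw [mem_Ioi] at hv hs
    have hX : (0:ℝ) ≤ (1 + p.2 * p.1 / R) ^ (-(2:ℝ)) := Real.rpow_nonneg (by positivity) _
    have hE : (0:ℝ) ≤ Real.exp (-p.2) := (Real.exp_pos _).le
    have hS : (0:ℝ) ≤ p.2 ^ (a-1) := Real.rpow_nonneg hs.le _
    calc ‖(1 + p.2 * p.1 / R) ^ (-(2:ℝ)) * F p.1 * Real.exp (-p.2) * p.2 ^ (a-1)‖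
        = (1 + p.2 * p.1 / R) ^ (-(2:ℝ)) * |F p.1| * Real.exp (-p.2) * p.2 ^ (a-1) := by
          simp only [Real.norm_eq_abs]
          rw [abs_mul, abs_mul, abs_mul, abs_of_nonneg hX, abs_of_nonneg hE, abs_of_nonneg hS]
      _ ≤ (1 + p.2 * p.1 / R) ^ (-(2:ℝ)) * (C * p.1 ^ (-q)) * Real.exp (-p.2) *
            p.2 ^ (a-1) := by gcongr; exact hC _ hv
      _ = G p := by
          rw [hGdef]
          simp only
          rw [show p.2 * p.1 / R = p.2 / R * p.1 from by ring]
          ring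
  -- now the chain of equalities
  have hswap : (∫ v in Ioi (0:ℝ), ∫ s in Ioi (0:ℝ),
        (1 + s * v / R) ^ (-(2:ℝ)) * F v * Real.exp (-s) * s ^ (a-1))
      = ∫ s in Ioi (0:ℝ), ∫ v in Ioi (0:ℝ),
        (1 + s * v / R) ^ (-(2:ℝ)) * F v * Real.exp (-s) * s ^ (a-1) := by
    exact MeasureTheory.integral_integral_swap hfInt
  have hsub : ∀ s ∈ Ioi (0:ℝ), (∫ v in Ioi (0:ℝ),
        (1 + s * v / R) ^ (-(2:ℝ)) * F v * Real.exp (-s) * s ^ (a-1))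
      = (s/R)⁻¹ * ∫ w in Ioi (0:ℝ),
        (1 + w) ^ (-(2:ℝ)) * F (R * w / s) * Real.exp (-s) * s ^ (a-1) := by
    intro s hs
    rw [mem_Ioi] at hs
    have hg := integral_comp_mul_left_Ioi
      (fun w : ℝ => (1 + w) ^ (-(2:ℝ)) * F (R * w / s) * Real.exp (-s) * s ^ (a-1)) 0
      (show (0:ℝ) < s/R by positivity)
    simp only [mul_zero, smul_eq_mul] at hg
    rw [← hg]
    refine setIntegral_congr_fun measurableSet_Ioi fun v hv => ?_
    have h2 : R * (s / R * v) / s = v := by field_simp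
    rw [h2, show s * v / R = s / R * v from by ring]
  symm
  calc R ^ (q-1) * ∫ v in Ioi (0:ℝ), ∫ s in Ioi (0:ℝ),
        (1 + s * v / R) ^ (-(2:ℝ)) * F v * Real.exp (-s) * s ^ (a-1)
      = R ^ (q-1) * ∫ s in Ioi (0:ℝ), (s/R)⁻¹ * ∫ w in Ioi (0:ℝ),
          (1 + w) ^ (-(2:ℝ)) * F (R * w / s) * Real.exp (-s) * s ^ (a-1) := by
        rw [hswap, setIntegral_congr_fun measurableSet_Ioi hsub]
    _ = ∫ s in Ioi (0:ℝ), ∫ w in Ioi (0:ℝ), Φ R (s, w) := by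
        rw [← MeasureTheory.integral_const_mul]
        refine setIntegral_congr_fun measurableSet_Ioi fun s hs => ?_
        rw [show R ^ (q-1) * ((s/R)⁻¹ * ∫ w in Ioi (0:ℝ),
            (1 + w) ^ (-(2:ℝ)) * F (R * w / s) * Real.exp (-s) * s ^ (a-1))
          = (∫ w in Ioi (0:ℝ),
            (1 + w) ^ (-(2:ℝ)) * F (R * w / s) * Real.exp (-s) * s ^ (a-1)) *
            ((s/R)⁻¹ * R ^ (q-1)) from by ring, ← MeasureTheory.integral_mul_const]
    _ = ∫ p, Φ R p ∂P :=
        MeasureTheory.integral_integral (f := fun s w => Φ R (s, w)) (hΦint R hR1)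
end
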